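/- arXiv:2109.00111 — 2 statements merged into one kernel-verified Lean document; each statement's English description precedes it below -/
import Mathlib

section
/- The skew Taylor complex is a complex: for every p, the composite ∂_p ∘ ∂_{p+1} = 0; equivalently ∂(∂(e_F)) = 0 in T for every subset F ⊆ Fin s. -/
/-- The bicharacter `C(α, β) = ∏_{i > j} (q i j)^(α_i·β_j)` on `ℤ^n`. -/
def skewC {k : Type*} [CommRing k] {n : ℕ} (q : Fin n → Fin n → kˣ)
    (α β : Fin n → ℤ) : kˣ :=
  ∏ i : Fin n, ∏ j ∈ Finset.univ.filter (fun j => j < i), q i j ^ (α i * β j)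

/-- The defining relations `x_i x_j = (q i j)·x_j x_i` of the skew polynomial ring. -/
inductive SkewRel (k : Type*) [CommRing k] (n : ℕ) (q : Fin n → Fin n → kˣ) :
    FreeAlgebra k (Fin n) → FreeAlgebra k (Fin n) → Prop
  | rel (i j : Fin n) :
      SkewRel k n q (FreeAlgebra.ι k i * FreeAlgebra.ι k j)
        ((q i j : k) • (FreeAlgebra.ι k j * FreeAlgebra.ι k i))

/-- The skew polynomial ring `R = k_q[x_1, …, x_n]`, as a quotient of the free algebra. -/
abbrev SkewPoly (k : Type*) [CommRing k] (n : ℕ) (q : Fin n → Fin n → kˣ) :=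
  RingQuot (SkewRel k n q)

/-- The variable `x_i` of the skew polynomial ring. -/
noncomputable def skewX {k : Type*} [CommRing k] {n : ℕ} (q : Fin n → Fin n → kˣ)
    (i : Fin n) : SkewPoly k n q :=
  RingQuot.mkAlgHom k (SkewRel k n q) (FreeAlgebra.ι k i)

/-- The ordered monomial `x^a = x_1^{a_1}⋯x_n^{a_n}` of the skew polynomial ring. -/
noncomputable def skewMono {k : Type*} [CommRing k] {n : ℕ} (q : Fin n → Fin n → kˣ)
    (a : Fin n → ℕ) : SkewPoly k n q :=
  ((List.finRange n).map fun i => skewX q i ^ a i).prod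

/-- The exponent vector `a_G` (componentwise maximum) of the least common multiple of
the monomials `x^{a_l}`, `l ∈ G`. -/
def lcmExp {n s : ℕ} (a : Fin s → Fin n → ℕ) (G : Finset (Fin s)) : Fin n → ℕ :=
  fun t => G.sup fun l => a l t

/-- The sign exponent `σ(F, i) = |{j ∈ F : j < i}|`. -/
def taylorSign {s : ℕ} (F : Finset (Fin s)) (i : Fin s) : ℕ :=
  (F.filter fun j => j < i).card

/-- The Taylor differential on a basis element:
`∂(e_F) = Σ_{i∈F} e_{F∖{i}}·(−1)^{σ(F,i)}·C(a_{F∖{i}}, a_F − a_{F∖{i}})⁻¹·x^{a_F − a_{F∖{i}}}`.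
The total Taylor module is realized as the free right module `Finset (Fin s) →₀ R`,
with `e_F = Finsupp.single F 1`; its degree-`p` part has basis `{e_F : |F| = p}`. -/
noncomputable def taylorBdry {k : Type*} [CommRing k] {n s : ℕ}
    (q : Fin n → Fin n → kˣ) (a : Fin s → Fin n → ℕ) (F : Finset (Fin s)) :
    Finset (Fin s) →₀ SkewPoly k n q :=
  ∑ i ∈ F, Finsupp.single (F.erase i)
    (((-1 : SkewPoly k n q) ^ taylorSign F i) *
      algebraMap k (SkewPoly k n q)
        (((skewC q (fun t => (lcmExp a (F.erase i) t : ℤ))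
            (fun t => (lcmExp a F t : ℤ) - (lcmExp a (F.erase i) t : ℤ)))⁻¹ :
          kˣ) : k) *
      skewMono q (lcmExp a F - lcmExp a (F.erase i)))

/-- The Taylor differential, extended to the whole module by right `R`-linearity. -/
noncomputable def taylorDiff {k : Type*} [CommRing k] {n s : ℕ}
    (q : Fin n → Fin n → kˣ) (a : Fin s → Fin n → ℕ)
    (v : Finset (Fin s) →₀ SkewPoly k n q) : Finset (Fin s) →₀ SkewPoly k n q :=
  v.sum fun F r => Finsupp.mapRange (· * r) (zero_mul r) (taylorBdry q a F)


section Aux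

variable {k : Type*} [CommRing k] {n : ℕ} (q : Fin n → Fin n → kˣ)

lemma skewX_mul (i j : Fin n) :
    skewX q i * skewX q j = ((q i j : k)) • (skewX q j * skewX q i) := by
  unfold skewX
  rw [← map_mul, ← map_mul, ← map_smul]
  exact RingQuot.mkAlgHom_rel k (SkewRel.rel i j)

lemma skewX_pow_mul (i j : Fin n) (m : ℕ) :
    skewX q i ^ m * skewX q j = (((q i j ^ m : kˣ) : k)) • (skewX q j * skewX q i ^ m) := by
  induction m with
  | zero => simp
  | succ m ih =>
    rw [pow_succ, mul_assoc, skewX_mul, mul_smul_comm, ← mul_assoc, ih,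
      smul_mul_assoc, smul_smul, pow_succ, Units.val_mul, mul_comm ((q i j : k)), mul_assoc]

lemma skewX_pow_mul_pow (i j : Fin n) (m l : ℕ) :
    skewX q i ^ m * skewX q j ^ l =
      (((q i j ^ (m * l) : kˣ) : k)) • (skewX q j ^ l * skewX q i ^ m) := by
  induction l with
  | zero => simp
  | succ l ih =>
    rw [pow_succ, ← mul_assoc, ih, smul_mul_assoc, mul_assoc, skewX_pow_mul,
      mul_smul_comm, smul_smul, ← mul_assoc, ← pow_succ, Nat.mul_succ, ← Units.val_mul,
      ← pow_add]

noncomputable def monoList (α : Fin n → ℕ) (L : List (Fin n)) : SkewPoly k n q :=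
  (L.map fun i => skewX q i ^ α i).prod

/-- coefficient for reordering `x^α_L · x^β_L` into `x^{(α+β)}_L`. -/
def cListC (α β : Fin n → ℕ) : List (Fin n) → kˣ
  | [] => 1
  | (j :: L) => (L.map fun i => q i j ^ (α i * β j)).prod * cListC α β L

lemma monoList_mul_pow (α : Fin n → ℕ) (j : Fin n) (m : ℕ) : ∀ (L : List (Fin n)),
    monoList q α L * skewX q j ^ m =
      (((L.map fun i => q i j ^ (α i * m)).prod : kˣ) : k) •
        (skewX q j ^ m * monoList q α L)
  | [] => by simp [monoList]
  | (i :: L) => by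
    simp only [monoList, List.map_cons, List.prod_cons, Units.val_mul]
    rw [mul_assoc, show (List.map (fun i => skewX q i ^ α i) L).prod = monoList q α L from rfl,
      monoList_mul_pow α j m L, mul_smul_comm, ← mul_assoc,
      skewX_pow_mul_pow, smul_mul_assoc, smul_smul, ← mul_assoc,
      mul_comm ((q i j ^ (α i * m) : kˣ) : k)]

lemma monoList_mul (α β : Fin n → ℕ) : ∀ (L : List (Fin n)),
    monoList q α L * monoList q β L =
      (((cListC q α β L : kˣ)) : k) • monoList q (α + β) L
  | [] => by simp [monoList, cListC]
  | (j :: L) => by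
    have hm : ∀ γ : Fin n → ℕ, monoList q γ (j :: L) = skewX q j ^ γ j * monoList q γ L := by
      intro γ; simp [monoList]
    rw [hm, hm, hm, mul_assoc, ← mul_assoc (monoList q α L),
      monoList_mul_pow, smul_mul_assoc, mul_smul_comm, mul_assoc,
      monoList_mul α β L, mul_smul_comm, mul_smul_comm, smul_smul, ← mul_assoc, ← pow_add]
    show _ = ((cListC q α β (j :: L) : kˣ) : k) • (skewX q j ^ (α + β) j * monoList q (α + β) L)
    simp only [cListC, Units.val_mul, Pi.add_apply]

lemma cListC_eq (α β : Fin n → ℕ) : ∀ L : List (Fin n), L.Pairwise (· < ·) →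
    cListC q α β L =
      ∏ j ∈ L.toFinset, ∏ i ∈ L.toFinset.filter (fun i => j < i), q i j ^ (α i * β j)
  | [], _ => by simp [cListC]
  | (j :: L), hp => by
    have hpl := (List.pairwise_cons.mp hp).2
    have hjl := (List.pairwise_cons.mp hp).1
    have hnd : L.Nodup := hpl.imp (fun h => ne_of_lt h)
    have hj : j ∉ L.toFinset := by
      simp only [List.mem_toFinset]; intro h; exact absurd (hjl j h) (lt_irrefl j)
    rw [cListC, cListC_eq α β L hpl, List.toFinset_cons, Finset.prod_insert hj]
    congr 1
    · rw [Finset.filter_insert, if_neg (lt_irrefl j), Finset.filter_true_of_mem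
        (fun i hi => hjl i (List.mem_toFinset.mp hi)), List.prod_toFinset _ hnd]
    · apply Finset.prod_congr rfl
      intro j' hj'
      rw [Finset.filter_insert, if_neg]
      exact fun h => absurd (hjl j' (List.mem_toFinset.mp hj')) (asymm h)

lemma cListC_finRange (α β : Fin n → ℕ) :
    cListC q α β (List.finRange n) =
      skewC q (fun t => (α t : ℤ)) (fun t => (β t : ℤ)) := by
  rw [cListC_eq q α β _ (List.pairwise_lt_finRange n), List.toFinset_finRange, skewC]
  rw [Finset.prod_comm' (t' := Finset.univ)
    (s' := fun i => Finset.univ.filter (fun j => j < i)) (by simp)]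
  apply Finset.prod_congr rfl; intro i _
  apply Finset.prod_congr rfl; intro j _
  rw [← zpow_natCast]
  norm_cast

lemma skewMono_mul (α β : Fin n → ℕ) :
    skewMono q α * skewMono q β =
      algebraMap k (SkewPoly k n q)
          ((skewC q (fun t => (α t : ℤ)) (fun t => (β t : ℤ)) : kˣ) : k) *
        skewMono q (α + β) := by
  rw [← Algebra.smul_def, ← cListC_finRange]
  exact monoList_mul q α β (List.finRange n)

lemma skewC_add_left (α α' β : Fin n → ℤ) :
    skewC q (α + α') β = skewC q α β * skewC q α' β := by
  rw [skewC, skewC, skewC, ← Finset.prod_mul_distrib]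
  apply Finset.prod_congr rfl; intro i _
  rw [← Finset.prod_mul_distrib]
  apply Finset.prod_congr rfl; intro j _
  rw [← zpow_add, Pi.add_apply, add_mul]

lemma skewC_add_right (α β β' : Fin n → ℤ) :
    skewC q α (β + β') = skewC q α β * skewC q α β' := by
  rw [skewC, skewC, skewC, ← Finset.prod_mul_distrib]
  apply Finset.prod_congr rfl; intro i _
  rw [← Finset.prod_mul_distrib]
  apply Finset.prod_congr rfl; intro j _
  rw [← zpow_add, Pi.add_apply, mul_add]

lemma skewC_cocycle (A B C : Fin n → ℤ) :
    (skewC q A (B - A))⁻¹ * (skewC q B (C - B))⁻¹ * skewC q (B - A) (C - B) =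
      (skewC q A (C - A))⁻¹ := by
  have h1 : skewC q B (C - B) = skewC q A (C - B) * skewC q (B - A) (C - B) := by
    rw [← skewC_add_left]; congr 1; abel
  have h2 : skewC q A (C - A) = skewC q A (B - A) * skewC q A (C - B) := by
    rw [← skewC_add_right]; congr 1; abel
  rw [h1, h2, mul_inv, mul_inv, ← mul_assoc, inv_mul_cancel_right]

lemma skewC_cocycle_nat (u v w : Fin n → ℕ)
    (huv : ∀ t, u t ≤ v t) (hvw : ∀ t, v t ≤ w t) :
    (skewC q (fun t => (u t : ℤ)) (fun t => (v t : ℤ) - (u t : ℤ)))⁻¹ *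
      (skewC q (fun t => (v t : ℤ)) (fun t => (w t : ℤ) - (v t : ℤ)))⁻¹ *
      skewC q (fun t => ((v - u) t : ℤ)) (fun t => ((w - v) t : ℤ)) =
      (skewC q (fun t => (u t : ℤ)) (fun t => (w t : ℤ) - (u t : ℤ)))⁻¹ := by
  have h1 : (fun t => ((v - u) t : ℤ)) =
      (fun t => (v t : ℤ)) - (fun t => (u t : ℤ)) := by
    funext t; simp [Nat.cast_sub (huv t)]
  have h2 : (fun t => ((w - v) t : ℤ)) =
      (fun t => (w t : ℤ)) - (fun t => (v t : ℤ)) := by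
    funext t; simp [Nat.cast_sub (hvw t)]
  rw [h1, h2]
  exact skewC_cocycle q _ _ _

lemma lcmExp_mono {s : ℕ} (a : Fin s → Fin n → ℕ) {G H : Finset (Fin s)}
    (h : G ⊆ H) (t : Fin n) : lcmExp a G t ≤ lcmExp a H t :=
  Finset.sup_mono h

lemma sign_succ {s : ℕ} {F : Finset (Fin s)} {i j : Fin s}
    (hj : j ∈ F) (h : j < i) :
    taylorSign (F.erase i) j + taylorSign F i
      = taylorSign (F.erase j) i + taylorSign F j + 1 := by
  unfold taylorSign
  have e1 : (F.erase i).filter (fun t => t < j) = F.filter (fun t => t < j) := by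
    rw [Finset.filter_erase, Finset.erase_eq_of_notMem]
    simp only [Finset.mem_filter, not_and]
    exact fun _ hlt => absurd (hlt.trans h) (lt_irrefl i)
  have e2 : (F.erase j).filter (fun t => t < i) = (F.filter (fun t => t < i)).erase j :=
    Finset.filter_erase _ _ _
  have hjm : j ∈ F.filter (fun t => t < i) := Finset.mem_filter.mpr ⟨hj, h⟩
  have hpos : 1 ≤ (F.filter (fun t => t < i)).card := Finset.card_pos.mpr ⟨j, hjm⟩
  rw [e1, e2, Finset.card_erase_of_mem hjm]
  omega

lemma neg_one_pow_phi {s0 : ℕ} (m : ℕ) :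
    ((-1 : SkewPoly k n q)) ^ m = algebraMap k (SkewPoly k n q) ((-1 : k) ^ m) := by
  rw [map_pow, map_neg, map_one]

/-- The summand coefficient of the Taylor differential. -/
noncomputable def dco {s : ℕ} (a : Fin s → Fin n → ℕ)
    (H : Finset (Fin s)) (l : Fin s) : SkewPoly k n q :=
  ((-1 : SkewPoly k n q) ^ taylorSign H l) *
    algebraMap k (SkewPoly k n q)
      (((skewC q (fun t => (lcmExp a (H.erase l) t : ℤ))
          (fun t => (lcmExp a H t : ℤ) - (lcmExp a (H.erase l) t : ℤ)))⁻¹ :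
        kˣ) : k) *
    skewMono q (lcmExp a H - lcmExp a (H.erase l))

lemma taylorBdry_eq {s : ℕ} (a : Fin s → Fin n → ℕ) (H : Finset (Fin s)) :
    taylorBdry q a H = ∑ l ∈ H, Finsupp.single (H.erase l) (dco q a H l) := rfl

lemma dco_mul {s : ℕ} (a : Fin s → Fin n → ℕ) {F : Finset (Fin s)} {i j : Fin s}
    (hi : i ∈ F) (hj : j ∈ F.erase i) :
    dco q a (F.erase i) j * dco q a F i =
      ((-1 : SkewPoly k n q) ^ (taylorSign (F.erase i) j + taylorSign F i)) *
        (algebraMap k (SkewPoly k n q)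
          (((skewC q (fun t => (lcmExp a ((F.erase i).erase j) t : ℤ))
              (fun t => (lcmExp a F t : ℤ) - (lcmExp a ((F.erase i).erase j) t : ℤ)))⁻¹ :
            kˣ) : k) *
          skewMono q (lcmExp a F - lcmExp a ((F.erase i).erase j))) := by
  have hφpow : ∀ m : ℕ, ((-1 : SkewPoly k n q)) ^ m
      = algebraMap k (SkewPoly k n q) ((-1 : k) ^ m) := by
    intro m; rw [map_pow, map_neg, map_one]
  have hsc : ∀ (c d : k) (x y : SkewPoly k n q),
      (algebraMap k (SkewPoly k n q) c * x) * (algebraMap k (SkewPoly k n q) d * y)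
        = algebraMap k (SkewPoly k n q) (c * d) * (x * y) := by
    intro c d x y
    rw [map_mul, mul_assoc, ← mul_assoc x _ y, ← Algebra.commutes d x]
    simp [mul_assoc]
  have hdco : ∀ (H : Finset (Fin s)) (l : Fin s), dco q a H l =
      algebraMap k (SkewPoly k n q)
        ((-1 : k) ^ taylorSign H l *
          (((skewC q (fun t => (lcmExp a (H.erase l) t : ℤ))
              (fun t => (lcmExp a H t : ℤ) - (lcmExp a (H.erase l) t : ℤ)))⁻¹ : kˣ) : k)) *
        skewMono q (lcmExp a H - lcmExp a (H.erase l)) := by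
    intro H l
    rw [dco, hφpow, ← map_mul]
  set u := lcmExp a ((F.erase i).erase j) with hu
  set v := lcmExp a (F.erase i) with hv
  set w := lcmExp a F with hw
  have huv : ∀ t, u t ≤ v t := fun t => lcmExp_mono a (Finset.erase_subset _ _) t
  have hvw : ∀ t, v t ≤ w t := fun t => lcmExp_mono a (Finset.erase_subset _ _) t
  have hsum : (v - u) + (w - v) = w - u := by
    funext t
    have := huv t; have := hvw t
    simp only [Pi.add_apply, Pi.sub_apply]
    omega
  rw [hdco, hdco, hsc, skewMono_mul, hsum, ← mul_assoc, ← map_mul, hφpow]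
  conv_rhs => rw [← mul_assoc, ← map_mul]
  congr 2
  rw [← skewC_cocycle_nat q u v w huv hvw]
  push_cast
  ring

lemma dco_cancel {s : ℕ} (a : Fin s → Fin n → ℕ) {F : Finset (Fin s)} {i j : Fin s}
    (hi : i ∈ F) (hj : j ∈ F) (hne : i ≠ j) :
    dco q a (F.erase i) j * dco q a F i + dco q a (F.erase j) i * dco q a F j = 0 := by
  have hji : j ∈ F.erase i := Finset.mem_erase.mpr ⟨fun h => hne h.symm, hj⟩
  have hij : i ∈ F.erase j := Finset.mem_erase.mpr ⟨hne, hi⟩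
  rw [dco_mul q a hi hji, dco_mul q a hj hij,
    show (F.erase j).erase i = (F.erase i).erase j from Finset.erase_right_comm,
    neg_one_pow_phi (s0 := s), neg_one_pow_phi (s0 := s), ← add_mul, ← map_add]
  have hz : ((-1 : k) ^ (taylorSign (F.erase i) j + taylorSign F i)) +
      ((-1 : k) ^ (taylorSign (F.erase j) i + taylorSign F j)) = 0 := by
    rcases lt_or_gt_of_ne hne with h | h
    · rw [sign_succ hi h, pow_succ]; ring
    · rw [sign_succ hj h, pow_succ]; ring
  rw [hz, map_zero, zero_mul]

end Aux

/-- the skew Taylor complex is a complex: `∂(∂(e_F)) = 0` for every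
subset `F ⊆ Fin s`; equivalently `∂_p ∘ ∂_{p+1} = 0` for every `p`. -/
theorem taylorDiff_taylorDiff {k : Type*} [CommRing k] {n s : ℕ} (hn : 0 < n) (hs : 1 ≤ s)
    (q : Fin n → Fin n → kˣ)
    (hqii : ∀ i, q i i = 1) (hqsym : ∀ i j, q i j * q j i = 1)
    (a : Fin s → Fin n → ℕ) (F : Finset (Fin s)) :
    taylorDiff q a (taylorDiff q a (Finsupp.single F (1 : SkewPoly k n q))) = 0 := by
  classical
  have h0 : ∀ (H : Finset (Fin s)),
      Finsupp.mapRange (· * (0 : SkewPoly k n q)) (zero_mul 0) (taylorBdry q a H) = 0 := by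
    intro H; ext G; simp [Finsupp.mapRange_apply]
  have hsingle : ∀ (G : Finset (Fin s)) (c : SkewPoly k n q),
      taylorDiff q a (Finsupp.single G c)
        = Finsupp.mapRange (· * c) (zero_mul c) (taylorBdry q a G) := by
    intro G c
    unfold taylorDiff
    exact Finsupp.sum_single_index (h0 G)
  have hD1 : taylorDiff q a (Finsupp.single F (1 : SkewPoly k n q)) = taylorBdry q a F := by
    rw [hsingle]; ext G; simp [Finsupp.mapRange_apply]
  rw [hD1, taylorBdry_eq]
  have hadd : ∀ u v : Finset (Fin s) →₀ SkewPoly k n q,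
      taylorDiff q a (u + v) = taylorDiff q a u + taylorDiff q a v := by
    intro u v
    unfold taylorDiff
    apply Finsupp.sum_add_index
    · intro H _; exact h0 H
    · intro H _ b1 b2; ext G; simp [Finsupp.mapRange_apply, mul_add]
  have hDsum : taylorDiff q a (∑ i ∈ F, Finsupp.single (F.erase i) (dco q a F i))
      = ∑ i ∈ F, taylorDiff q a (Finsupp.single (F.erase i) (dco q a F i)) :=
    map_sum (AddMonoidHom.mk' (taylorDiff q a) hadd) _ F
  rw [hDsum]
  have hexp : ∀ i ∈ F, taylorDiff q a (Finsupp.single (F.erase i) (dco q a F i))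
      = ∑ j ∈ F.erase i, Finsupp.single ((F.erase i).erase j)
          (dco q a (F.erase i) j * dco q a F i) := by
    intro i _
    rw [hsingle, taylorBdry_eq]
    refine (Finsupp.mapRange_finset_sum (AddMonoidHom.mulRight (dco q a F i)) _ _).trans ?_
    refine Finset.sum_congr rfl fun j _ => ?_
    rw [Finsupp.mapRange_single]
    rfl
  rw [Finset.sum_congr rfl hexp, Finset.sum_sigma']
  apply Finset.sum_involution (fun p _ => ⟨p.2, p.1⟩)
  · intro p hp
    obtain ⟨i, j⟩ := p
    rw [Finset.mem_sigma, Finset.mem_erase] at hp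
    dsimp only
    rw [show (F.erase j).erase i = (F.erase i).erase j from Finset.erase_right_comm,
      ← Finsupp.single_add, dco_cancel q a hp.1 hp.2.2 (fun h => hp.2.1 h.symm),
      Finsupp.single_zero]
  · intro p hp _
    obtain ⟨i, j⟩ := p
    rw [Finset.mem_sigma, Finset.mem_erase] at hp
    exact fun h => hp.2.1 (congrArg Sigma.fst h)
  · intro p hp
    rfl
  · intro p hp
    obtain ⟨i, j⟩ := p
    rw [Finset.mem_sigma, Finset.mem_erase] at hp
    exact Finset.mem_sigma.mpr ⟨hp.2.2, Finset.mem_erase.mpr ⟨fun h => hp.2.1 h.symm, hp.1⟩⟩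
end

section
/- Let u, w, w' ∈ ℕ^n with w' ≤ w, and set P := u ⊔ w and P' := u ⊔ w'. Then C(P − P', (u + w) − P) · C(P', P − P')⁻¹ · C(u, w) · C(P, (u + w) − P)⁻¹ = C((u + w') − P', w − w') · C(P', (u + w') − P')⁻¹ · C(u, w') · C(w', w − w')⁻¹, and both sides equal C(P', (u + w) − P')⁻¹ · C(u, w). -/
/-- Coercion of an exponent vector in `ℕ^n` to `ℤ^n`. -/
def expZ {n : ℕ} (a : Fin n → ℕ) : Fin n → ℤ := fun i => (a i : ℤ)

lemma skewC_add_left_s14 {k : Type*} [CommRing k] {n : ℕ} (q : Fin n → Fin n → kˣ)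
    (a b c : Fin n → ℤ) : skewC q (a + b) c = skewC q a c * skewC q b c := by
  simp [skewC, add_mul, zpow_add, Finset.prod_mul_distrib]

lemma skewC_add_right_s14 {k : Type*} [CommRing k] {n : ℕ} (q : Fin n → Fin n → kˣ)
    (a b c : Fin n → ℤ) : skewC q a (b + c) = skewC q a b * skewC q a c := by
  simp [skewC, mul_add, zpow_add, Finset.prod_mul_distrib]

lemma skewC_sub_left {k : Type*} [CommRing k] {n : ℕ} (q : Fin n → Fin n → kˣ)
    (a b c : Fin n → ℤ) : skewC q (a - b) c = skewC q a c * (skewC q b c)⁻¹ := by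
  simp [skewC, sub_mul, zpow_sub, Finset.prod_mul_distrib, Finset.prod_inv_distrib,
    div_eq_mul_inv]

lemma skewC_sub_right {k : Type*} [CommRing k] {n : ℕ} (q : Fin n → Fin n → kˣ)
    (a b c : Fin n → ℤ) : skewC q a (b - c) = skewC q a b * (skewC q a c)⁻¹ := by
  simp [skewC, mul_sub, zpow_sub, Finset.prod_mul_distrib, Finset.prod_inv_distrib,
    div_eq_mul_inv]

/-- the scalar identity for the Leibniz rule on the skew Taylor
resolution, in the case `i ∈ W`.  Here `u = a_V`, `w = a_W`, `w' = a_{W∖{i}}`,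
`P = u ⊔ w`, `P' = u ⊔ w'`. -/
theorem skewC_leibniz_right {k : Type*} [CommRing k] {n : ℕ} (hn : 0 < n)
    (q : Fin n → Fin n → kˣ)
    (hqii : ∀ i, q i i = 1) (hqsym : ∀ i j, q i j * q j i = 1)
    (u w w' : Fin n → ℕ) (hw : w' ≤ w) :
    skewC q (expZ (u ⊔ w) - expZ (u ⊔ w')) (expZ u + expZ w - expZ (u ⊔ w)) *
          (skewC q (expZ (u ⊔ w')) (expZ (u ⊔ w) - expZ (u ⊔ w')))⁻¹ *
          skewC q (expZ u) (expZ w) *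
          (skewC q (expZ (u ⊔ w)) (expZ u + expZ w - expZ (u ⊔ w)))⁻¹ =
        skewC q (expZ u + expZ w' - expZ (u ⊔ w')) (expZ w - expZ w') *
          (skewC q (expZ (u ⊔ w')) (expZ u + expZ w' - expZ (u ⊔ w')))⁻¹ *
          skewC q (expZ u) (expZ w') *
          (skewC q (expZ w') (expZ w - expZ w'))⁻¹ ∧
      skewC q (expZ (u ⊔ w) - expZ (u ⊔ w')) (expZ u + expZ w - expZ (u ⊔ w)) *
          (skewC q (expZ (u ⊔ w')) (expZ (u ⊔ w) - expZ (u ⊔ w')))⁻¹ *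
          skewC q (expZ u) (expZ w) *
          (skewC q (expZ (u ⊔ w)) (expZ u + expZ w - expZ (u ⊔ w)))⁻¹ =
        (skewC q (expZ (u ⊔ w')) (expZ u + expZ w - expZ (u ⊔ w')))⁻¹ *
          skewC q (expZ u) (expZ w) := by
  constructor <;>
  · simp only [skewC]
    simp only [← Finset.prod_inv_distrib, ← zpow_neg, ← Finset.prod_mul_distrib, ← zpow_add]
    refine Finset.prod_congr rfl fun i _ => Finset.prod_congr rfl fun j _ => ?_
    congr 1
    simp only [Pi.add_apply, Pi.sub_apply]
    ring
end
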